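/- Any inverse limit of semisimple rings along surjective connecting homomorphisms (indexed by ℕ) is isomorphic to a direct product of semisimple rings; in particular it is unit-regular. -/

import Mathlib

/-!
A surjection `φ : R → S` from a semisimple ring splits as a product projection: its kernel is
`R e` for an idempotent `e`, which is central because a semisimple ring has no nonzero `x` with
`x R x = 0`; hence `R ≃ S × eRe`. Applied to each connecting map, `R (k+1) ≃ R k × T k`, and the
inverse limit becomes `R 0 × ∏ T k`. For unit-regularity, Wedderburn–Artin reduces a semisimple
ring to matrix rings over division rings, i.e. to endomorphism rings of finite-dimensional vector
spaces; there `f` is unit-regular because a complement of `range f` has the same dimension as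
`ker f`, so an automorphism can send it onto `ker f` and agree with `f` on a complement of `ker f`.
-/

universe u

/-- The inverse limit of an inverse system of rings `(Rᵢ, fᵢ)` indexed by `ℕ`. -/
def ringInverseLimit (R : ℕ → Type u) [∀ i, Ring (R i)]
    (f : ∀ i, R (i + 1) →+* R i) : Subring (∀ i, R i) where
  carrier := {x | ∀ i, f i (x (i + 1)) = x i}
  zero_mem' := by intro i; simp
  one_mem' := by intro i; simp
  add_mem' := by intro x y hx hy i; simp [map_add, hx i, hy i]
  mul_mem' := by intro x y hx hy i; simp [map_mul, hx i, hy i]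
  neg_mem' := by intro x hx i; simp [map_neg, hx i]

open LinearMap Submodule Module

def IsUnitRegular (M : Type*) [Monoid M] : Prop :=
  ∀ a : M, ∃ u : Mˣ, a * u * a = a

namespace IsUnitRegular

variable {M N : Type*} [Monoid M] [Monoid N]

theorem of_mulEquiv (h : IsUnitRegular M) (e : M ≃* N) : IsUnitRegular N := by
  intro a
  obtain ⟨u, hu⟩ := h (e.symm a)
  exact ⟨Units.map e u, by simpa using congr(e $hu)⟩

theorem mulOpposite (h : IsUnitRegular M) : IsUnitRegular Mᵐᵒᵖ := by
  intro a
  obtain ⟨u, hu⟩ := h a.unop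
  refine ⟨Units.opEquiv.symm (MulOpposite.op u), MulOpposite.unop_injective ?_⟩
  simpa [mul_assoc] using hu

theorem pi {ι : Type*} {M : ι → Type*} [∀ i, Monoid (M i)] (h : ∀ i, IsUnitRegular (M i)) :
    IsUnitRegular (Π i, M i) := by
  intro a
  choose u hu using fun i => h i (a i)
  exact ⟨MulEquiv.piUnits.symm u, funext hu⟩

end IsUnitRegular

theorem Module.End.exists_mul_unit_mul_eq_self {R M : Type*} [Ring R] [AddCommGroup M]
    [Module R M] (f : Module.End R M) {C E : Submodule R M} (hC : IsCompl (ker f) C)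
    (hE : IsCompl E (range f)) (φ : E ≃ₗ[R] ker f) : ∃ u : (Module.End R M)ˣ, f * u * f = f := by
  let fC : C ≃ₗ[R] range f := ((ker f).quotientEquivOfIsCompl C hC).symm ≪≫ₗ f.quotKerEquivRange
  let g : M ≃ₗ[R] M := ((ker f).prodEquivOfIsCompl C hC).symm ≪≫ₗ (φ.symm.prodCongr fC) ≪≫ₗ
    E.prodEquivOfIsCompl (range f) hE
  have hg : ∀ c : C, g c = f c := fun c => by simp [g, fC]
  refine ⟨GeneralLinearGroup.ofLinearEquiv g.symm, LinearMap.ext fun x => ?_⟩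
  obtain ⟨k, hk, c, hc, rfl⟩ := mem_sup.mp (hC.sup_eq_top ▸ mem_top : x ∈ ker f ⊔ C)
  have hfc : f c = g c := (hg ⟨c, hc⟩).symm
  simp [mem_ker.mp hk, hfc]

theorem Module.End.isUnitRegular {D V : Type*} [DivisionRing D] [AddCommGroup V] [Module D V]
    [FiniteDimensional D V] : IsUnitRegular (Module.End D V) := by
  intro f
  obtain ⟨C, hC⟩ := (ker f).exists_isCompl
  obtain ⟨E, hE⟩ := (range f).exists_isCompl
  have hdim : finrank D E = finrank D (ker f) := by
    have := f.finrank_range_add_finrank_ker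
    have := Submodule.finrank_add_eq_of_isCompl hE
    omega
  exact f.exists_mul_unit_mul_eq_self hC hE.symm (.ofFinrankEq _ _ hdim)

theorem Matrix.isUnitRegular {D n : Type*} [DivisionRing D] [Fintype n] [DecidableEq n] :
    IsUnitRegular (Matrix n n D) :=
  Module.End.isUnitRegular.mulOpposite.of_mulEquiv
    (matrixRingEquivEndVecMulOpposite (A := D) (ι := n)).symm.toMulEquiv

theorem IsSemisimpleRing.isUnitRegular (R : Type*) [Ring R] [IsSemisimpleRing R] :
    IsUnitRegular R := by
  obtain ⟨n, D, d, _, -, ⟨e⟩⟩ := IsSemisimpleRing.exists_ringEquiv_pi_matrix_divisionRing R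
  exact (IsUnitRegular.pi fun i => Matrix.isUnitRegular).of_mulEquiv e.symm.toMulEquiv

namespace IsIdempotentElem

variable {R : Type*} [Ring R] {e : R}

theorem mul_mul_self_of_forall_mul_comm (he : IsIdempotentElem e) (hc : ∀ r, e * r = r * e)
    (x : R) : e * x * e = e * x := by
  rw [mul_assoc, ← hc, ← mul_assoc, he.eq]

def toCorner (he : IsIdempotentElem e) (hc : ∀ r, e * r = r * e) : R →+* he.Corner where
  toFun r := ⟨e * r * e, r, rfl⟩
  map_one' := Subtype.ext <| show e * 1 * e = e by rw [mul_one, he.eq]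
  map_mul' r s := Subtype.ext <| show e * (r * s) * e = e * r * e * (e * s * e) by
    simp only [he.mul_mul_self_of_forall_mul_comm hc]
    rw [hc s, ← mul_assoc (e * r) s e, mul_assoc e r s, he.mul_mul_self_of_forall_mul_comm hc]
  map_zero' := Subtype.ext <| show e * 0 * e = 0 by simp
  map_add' r s := Subtype.ext <| show e * (r + s) * e = e * r * e + e * s * e by
    rw [mul_add, add_mul]

end IsIdempotentElem

namespace IsSemisimpleRing

variable {R : Type*} [Ring R] [IsSemisimpleRing R]

theorem eq_zero_of_mul_mul_eq_zero {x : R} (hx : ∀ r, x * r * x = 0) : x = 0 := by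
  -- `R x = R f` with `f = y x` idempotent, so `f = y (x y x) = 0`.
  obtain ⟨f, hf, hxf⟩ := ideal_eq_span_idempotent (Ideal.span {x})
  obtain ⟨y, rfl⟩ := Ideal.mem_span_singleton'.mp (hxf ▸ Ideal.mem_span_singleton_self f)
  obtain ⟨z, hz⟩ := Ideal.mem_span_singleton'.mp (hxf ▸ Ideal.mem_span_singleton_self x)
  have : y * x = 0 := by rw [← hf.eq, mul_assoc, ← mul_assoc x, hx, mul_zero]
  rw [← hz, this, mul_zero]

theorem exists_isIdempotentElem_forall_mul_comm (I : Ideal R) [I.IsTwoSided] :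
    ∃ e : R, IsIdempotentElem e ∧ (∀ r, e * r = r * e) ∧ I = .span {e} := by
  obtain ⟨e, he, hI⟩ := ideal_eq_span_idempotent I
  have mul_idem : ∀ x ∈ I, x * e = x := fun x hx => by
    obtain ⟨t, rfl⟩ := Ideal.mem_span_singleton'.mp (hI ▸ hx)
    rw [mul_assoc, he.eq]
  have heI : e ∈ I := hI ▸ Ideal.mem_span_singleton_self e
  refine ⟨e, he, fun r => ?_, hI⟩
  -- `x := r e - e r e` lies in `I` and `e x = 0`, so `x s x = x s e x = 0`.
  set x := r * e - e * r * e
  have hxI : x ∈ I := I.sub_mem (I.mul_mem_left r heI) (I.mul_mem_left _ heI)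
  have hex : e * x = 0 := by simp [x, mul_sub, ← mul_assoc, he.eq]
  have hx : x = 0 := eq_zero_of_mul_mul_eq_zero fun s => by
    rw [← mul_idem _ (I.mul_mem_right s hxI), mul_assoc _ e, hex, mul_zero]
  rw [← mul_idem _ (I.mul_mem_right r heI), sub_eq_zero.mp hx]

end IsSemisimpleRing

theorem IsSemisimpleRing.exists_ringEquiv_prod_of_surjective {R S : Type u} [Ring R] [Ring S]
    [IsSemisimpleRing R] (φ : R →+* S) (hφ : Function.Surjective φ) :
    ∃ (T : Type u) (_ : Ring T), IsSemisimpleRing T ∧ ∃ e : R ≃+* S × T, ∀ r, (e r).1 = φ r := by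
  obtain ⟨e, he, hc, hker⟩ := exists_isIdempotentElem_forall_mul_comm (RingHom.ker φ)
  have hφe : e ∈ RingHom.ker φ := hker ▸ Ideal.mem_span_singleton_self e
  let ψ := he.toCorner hc
  have hψ : Function.Surjective ψ := fun ⟨_, r, rfl⟩ => ⟨r, rfl⟩
  have hbij : Function.Bijective (φ.prod ψ) := by
    refine ⟨(injective_iff_map_eq_zero _).mpr fun r hr => ?_, ?_⟩
    · have hr₁ : r ∈ RingHom.ker φ := congr_arg Prod.fst hr
      have hr₂ : e * r * e = 0 := congr_arg (fun x => x.2.1) hr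
      rw [hker] at hr₁
      obtain ⟨t, rfl⟩ := Ideal.mem_span_singleton'.mp hr₁
      rwa [he.mul_mul_self_of_forall_mul_comm hc, ← hc, ← mul_assoc, he.eq, hc] at hr₂
    · rintro ⟨s, t⟩
      obtain ⟨p, rfl⟩ := hφ s
      obtain ⟨q, rfl⟩ := hψ t
      refine ⟨p - p * e + q * e, Prod.ext ?_ (Subtype.ext ?_)⟩
      · simp [RingHom.mem_ker.mp hφe]
      · show e * (p - p * e + q * e) * e = e * q * e
        simp only [mul_add, mul_sub, ← mul_assoc, he.mul_mul_self_of_forall_mul_comm hc, sub_self,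
          zero_add]
  exact ⟨he.Corner, inferInstance, ψ.isSemisimpleRing_of_surjective hψ,
    RingEquiv.ofBijective _ hbij, fun r => rfl⟩

def consFamily (A : Type u) (T : ℕ → Type u) : ℕ → Type u
  | 0 => A
  | k + 1 => T k

instance consFamily.instRing (A : Type u) (T : ℕ → Type u) [Ring A] [∀ k, Ring (T k)] :
    ∀ i, Ring (consFamily A T i)
  | 0 => ‹Ring A›
  | k + 1 => ‹∀ k, Ring (T k)› k

namespace ringInverseLimit

variable {R : ℕ → Type u} [∀ i, Ring (R i)] {f : ∀ i, R (i + 1) →+* R i}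

def proj (i : ℕ) : ringInverseLimit R f →+* R i :=
  (Pi.evalRingHom R i).comp (ringInverseLimit R f).subtype

variable {T : ℕ → Type u} [∀ k, Ring (T k)] (e : ∀ k, R (k + 1) ≃+* R k × T k)

def toConsFamily : ∀ i, ringInverseLimit R f →+* consFamily (R 0) T i
  | 0 => proj 0
  | k + 1 => (RingHom.snd _ _).comp (((e k) : R (k + 1) →+* R k × T k).comp (proj (k + 1)))

theorem bijective_pi_toConsFamily (he : ∀ k r, (e k r).1 = f k r) :
    Function.Bijective (RingHom.pi (toConsFamily (f := f) e)) := by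
  refine ⟨(injective_iff_map_eq_zero _).mpr fun x hx => Subtype.ext (funext fun i => ?_),
    fun s => ?_⟩
  · induction i with
    | zero => exact congr_fun hx 0
    | succ k ih =>
      refine (map_eq_zero_iff _ (e k).injective).mp (Prod.ext ?_ (congr_fun hx (k + 1)))
      rw [he, x.2 k, ih]
      rfl
  · let x : ∀ i, R i := fun i =>
      Nat.rec (motive := R) (s 0) (fun k xk => (e k).symm (xk, s (k + 1))) i
    have hmem : x ∈ ringInverseLimit R f := fun k => by
      rw [← he]
      exact congr_arg Prod.fst ((e k).apply_symm_apply _)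
    refine ⟨⟨x, hmem⟩, funext fun i => ?_⟩
    cases i with
    | zero => rfl
    | succ k => exact congr_arg Prod.snd ((e k).apply_symm_apply _)

end ringInverseLimit

/-- An inverse limit of semisimple rings along surjective connecting maps is
isomorphic to a direct product of semisimple rings; in particular it is unit-regular. -/
theorem stmt_10 (R : ℕ → Type u) [∀ i, Ring (R i)] (f : ∀ i, R (i + 1) →+* R i)
    (hsurj : ∀ i, Function.Surjective (f i)) (hss : ∀ i, IsSemisimpleRing (R i)) :
    (∃ (S : ℕ → Type u) (inst : ∀ i, Ring (S i)),
      (∀ i, letI := inst i; IsSemisimpleRing (S i)) ∧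
      (letI : ∀ i, Ring (S i) := inst;
        Nonempty ((ringInverseLimit R f) ≃+* ((i : ℕ) → S i)))) ∧
    (∀ a : ringInverseLimit R f, ∃ u : (ringInverseLimit R f)ˣ, a * u * a = a) := by
  choose T _ hT e he using fun k =>
    have := hss (k + 1)
    IsSemisimpleRing.exists_ringEquiv_prod_of_surjective (f k) (hsurj k)
  have hS : ∀ i, IsSemisimpleRing (consFamily (R 0) T i)
    | 0 => hss 0
    | k + 1 => hT k
  let Φ := RingEquiv.ofBijective _ (ringInverseLimit.bijective_pi_toConsFamily e he)
  have hunit : IsUnitRegular (∀ i, consFamily (R 0) T i) :=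
    .pi fun i => have := hS i; IsSemisimpleRing.isUnitRegular _
  exact ⟨⟨consFamily (R 0) T, inferInstance, hS, ⟨Φ⟩⟩, hunit.of_mulEquiv Φ.symm.toMulEquiv⟩
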